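/- If K is a simplicial complex, σ ∈ K a simplex whose link in K is the boundary ∂τ of a simplex τ with τ ∉ K, then the bistellar move χ_σ(K) := (K \ (σ * ∂τ)) ∪ (∂σ * τ) is again a simplicial complex, and applying the reverse bistellar move χ_τ to χ_σ(K) recovers K. -/
import Mathlib


/-! Abstract simplicial complexes as downward-closed sets of finite subsets of a
vertex type, with joins, boundaries, links, and bistellar moves. -/

/-- A (abstract, possibly infinite) simplicial complex: a downward-closed family of
finite vertex sets. -/
def IsComplex {α : Type*} (K : Set (Finset α)) : Prop :=
  ∀ s ∈ K, ∀ t ⊆ s, t ∈ K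

/-- Join of two complexes (on disjoint vertex sets): all unions of a simplex of `A`
and a simplex of `B`. -/
def joinCx {α : Type*} [DecidableEq α] (A B : Set (Finset α)) : Set (Finset α) :=
  {u | ∃ s ∈ A, ∃ t ∈ B, u = s ∪ t}

/-- The full simplex on a vertex set `σ`: all subsets of `σ`. -/
def fullCx {α : Type*} (σ : Finset α) : Set (Finset α) := {t | t ⊆ σ}

/-- The boundary `∂σ` of the simplex `σ`: all proper subsets of `σ`. -/
def bdryCx {α : Type*} (σ : Finset α) : Set (Finset α) := {t | t ⊂ σ}

/-- The link of `σ` in `K`: `{η | η ∩ σ = ∅ and η ∪ σ ∈ K}`. -/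
def linkCx {α : Type*} [DecidableEq α] (K : Set (Finset α)) (σ : Finset α) :
    Set (Finset α) :=
  {η | η ∩ σ = ∅ ∧ η ∪ σ ∈ K}

/-- The bistellar move `χ_σ(K) = (K \ (σ * ∂τ)) ∪ (∂σ * τ)`. -/
def bistellar {α : Type*} [DecidableEq α] (K : Set (Finset α)) (σ τ : Finset α) :
    Set (Finset α) :=
  (K \ joinCx (fullCx σ) (bdryCx τ)) ∪ joinCx (bdryCx σ) (fullCx τ)

lemma join_comm' {α : Type*} [DecidableEq α] (A B : Set (Finset α)) (u : Finset α) :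
    u ∈ joinCx A B ↔ u ∈ joinCx B A := by
  constructor <;> rintro ⟨s, hs, t, ht, rfl⟩ <;>
    exact ⟨t, ht, s, hs, Finset.union_comm s t⟩

lemma join_char {α : Type*} [DecidableEq α] {a b : Finset α} (hab : a ∩ b = ∅)
    (u : Finset α) :
    u ∈ joinCx (fullCx a) (bdryCx b) ↔ u ⊆ a ∪ b ∧ ¬ b ⊆ u := by
  constructor
  · rintro ⟨s, hs, t, ht, rfl⟩
    have ht' : t ⊂ b := ht
    refine ⟨Finset.union_subset_union hs ht'.subset, fun hb => ht'.ne ?_⟩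
    refine Finset.Subset.antisymm ht'.subset (fun x hx => ?_)
    rcases Finset.mem_union.1 (hb hx) with h | h
    · exact absurd (Finset.mem_inter.2 ⟨hs h, hx⟩) (by simp [hab])
    · exact h
  · rintro ⟨hu, hb⟩
    refine ⟨u ∩ a, Finset.inter_subset_right, u ∩ b,
      Finset.ssubset_def.2 ⟨Finset.inter_subset_right,
        fun h => hb (h.trans Finset.inter_subset_left)⟩, ?_⟩
    rw [← Finset.inter_union_distrib_left, Finset.inter_eq_left.2 hu]

example : True := trivial


/-- If `K` is a simplicial complex, `σ ∈ K` a simplex whose link in `K`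
is the boundary `∂τ` of a simplex `τ` with `τ ∉ K`, then the bistellar move
`χ_σ(K) := (K \ (σ * ∂τ)) ∪ (∂σ * τ)` is again a simplicial complex; moreover in
`χ_σ(K)` the simplex `σ` is absent and the link of `τ` is `∂σ`, so the reverse
bistellar move `χ_τ` is defined on `χ_σ(K)` and recovers `K`:
`χ_τ(χ_σ(K)) = K`. -/
theorem stmt9 {α : Type*} [DecidableEq α] (K : Set (Finset α))
    (hK : IsComplex K) (σ τ : Finset α)
    (hσK : σ ∈ K) (hτK : τ ∉ K) (hσ : σ ≠ ∅) (hτ : τ ≠ ∅)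
    (hdisj : σ ∩ τ = ∅)
    (hlink : linkCx K σ = bdryCx τ) :
    IsComplex (bistellar K σ τ) ∧
    σ ∉ bistellar K σ τ ∧
    linkCx (bistellar K σ τ) τ = bdryCx σ ∧
    bistellar (bistellar K σ τ) τ σ = K := by
  have hdisj' : τ ∩ σ = ∅ := by rw [Finset.inter_comm]; exact hdisj
  -- K inside the powerset of σ ∪ τ
  have Kmem : ∀ u : Finset α, u ⊆ σ ∪ τ → (u ∈ K ↔ ¬ τ ⊆ u) := by
    intro u hu
    constructor
    · intro huK hτu
      exact hτK (hK u huK τ hτu)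
    · intro hτu
      have ht : u ∩ τ ⊂ τ := Finset.ssubset_def.2 ⟨Finset.inter_subset_right,
        fun h => hτu (h.trans Finset.inter_subset_left)⟩
      have hlk : u ∩ τ ∈ linkCx K σ := by rw [hlink]; exact ht
      have hmem : (u ∩ τ) ∪ σ ∈ K := hlk.2
      refine hK _ hmem u (fun x hx => ?_)
      rcases Finset.mem_union.1 (hu hx) with h | h
      · exact Finset.mem_union.2 (Or.inr h)
      · exact Finset.mem_union.2 (Or.inl (Finset.mem_inter.2 ⟨hx, h⟩))
  -- any simplex of K containing σ lies in σ ∪ τ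
  have factB : ∀ u ∈ K, σ ⊆ u → u ⊆ σ ∪ τ := by
    intro u huK hσu
    have h1 : (u \ σ) ∩ σ = ∅ := Finset.sdiff_inter_self σ u
    have h2 : (u \ σ) ∪ σ = u := Finset.sdiff_union_of_subset hσu
    have hlk : u \ σ ∈ linkCx K σ := ⟨h1, by rw [h2]; exact huK⟩
    rw [hlink] at hlk
    have hlk' : u \ σ ⊂ τ := hlk
    intro x hx
    by_cases hxσ : x ∈ σ
    · exact Finset.mem_union.2 (Or.inl hxσ)
    · exact Finset.mem_union.2 (Or.inr (hlk'.subset (Finset.mem_sdiff.2 ⟨hx, hxσ⟩)))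
  -- characterization of the bistellar move
  have χchar : ∀ u : Finset α, u ∈ bistellar K σ τ ↔
      (u ∈ K ∧ ¬ u ⊆ σ ∪ τ) ∨ (u ⊆ σ ∪ τ ∧ ¬ σ ⊆ u) := by
    intro u
    unfold bistellar
    rw [Set.mem_union, Set.mem_diff, join_char hdisj]
    rw [join_comm', join_char hdisj', Finset.union_comm τ σ]
    constructor
    · rintro (⟨huK, hn⟩ | h)
      · by_cases hu : u ⊆ σ ∪ τ
        · exact Or.inr ⟨hu, fun hσu => hn ⟨hu, (Kmem u hu).1 huK⟩⟩
        · exact Or.inl ⟨huK, hu⟩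
      · exact Or.inr h
    · rintro (⟨huK, hu⟩ | ⟨hu, hσu⟩)
      · exact Or.inl ⟨huK, fun h => hu h.1⟩
      · exact Or.inr ⟨hu, hσu⟩
  have hσχ : σ ∉ bistellar K σ τ := by
    rw [χchar]
    rintro (⟨-, h⟩ | ⟨-, h⟩)
    · exact h Finset.subset_union_left
    · exact h (Finset.Subset.refl σ)
  refine ⟨?_, hσχ, ?_, ?_⟩
  · -- IsComplex
    intro u hu v hv
    rw [χchar] at hu ⊢
    rcases hu with ⟨huK, hun⟩ | ⟨huS, hσu⟩
    · have hvK : v ∈ K := hK u huK v hv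
      by_cases hvS : v ⊆ σ ∪ τ
      · refine Or.inr ⟨hvS, fun hσv => hun (factB u huK (hσv.trans hv))⟩
      · exact Or.inl ⟨hvK, hvS⟩
    · exact Or.inr ⟨hv.trans huS, fun hσv => hσu (hσv.trans hv)⟩
  · -- link of τ in the new complex is ∂σ
    ext η
    simp only [linkCx, bdryCx, Set.mem_setOf_eq]
    constructor
    · rintro ⟨hητ, hmem⟩
      rw [χchar] at hmem
      rcases hmem with ⟨huK, -⟩ | ⟨huS, hσu⟩
      · exact absurd (hK _ huK τ Finset.subset_union_right) hτK
      · have hησ : η ⊆ σ := by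
          intro x hx
          rcases Finset.mem_union.1 (huS (Finset.mem_union.2 (Or.inl hx))) with h | h
          · exact h
          · exact absurd (Finset.mem_inter.2 ⟨hx, h⟩) (by simp [hητ])
        refine Finset.ssubset_def.2 ⟨hησ, fun hσn => hσu (fun x hx => ?_)⟩
        exact Finset.mem_union.2 (Or.inl (hσn hx))
    · intro hησ
      have hησ' : η ⊆ σ := hησ.subset
      have hητ : η ∩ τ = ∅ := by
        rw [← Finset.subset_empty, ← hdisj]
        exact Finset.inter_subset_inter hησ' (Finset.Subset.refl τ)
      refine ⟨hητ, (χchar _).2 (Or.inr ⟨Finset.union_subset_union hησ'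
        (Finset.Subset.refl τ), fun hσu => hησ.ne ?_⟩)⟩
      refine Finset.Subset.antisymm hησ' (fun x hx => ?_)
      rcases Finset.mem_union.1 (hσu hx) with h | h
      · exact h
      · exact absurd (Finset.mem_inter.2 ⟨hx, h⟩) (by simp [hdisj])
  · -- reverse move recovers K
    ext u
    rw [show bistellar (bistellar K σ τ) τ σ =
      (bistellar K σ τ \ joinCx (fullCx τ) (bdryCx σ)) ∪ joinCx (bdryCx τ) (fullCx σ) from rfl]
    rw [Set.mem_union, Set.mem_diff, join_char hdisj']
    rw [join_comm', join_char hdisj, Finset.union_comm τ σ, χchar]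
    constructor
    · rintro (⟨(⟨huK, -⟩ | ⟨hu, hσu⟩), hn⟩ | ⟨hu, hτu⟩)
      · exact huK
      · exact absurd ⟨hu, hσu⟩ hn
      · exact (Kmem u hu).2 hτu
    · intro huK
      by_cases hu : u ⊆ σ ∪ τ
      · exact Or.inr ⟨hu, (Kmem u hu).1 huK⟩
      · exact Or.inl ⟨Or.inl ⟨huK, hu⟩, fun h => hu h.1⟩
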